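/- Let U₀ ⊆ ℝ^n be a nonempty compact set, A ∈ ℝ^{n×n}, t ≥ 0, and let η ≥ 1 be an integer. For Δt > 0 set Ã_i = A^i·Δt^{i+1}/(i+1)!, D(Δt) = { Δt·M·u : M ∈ ℝ^{n×n} with |M| ≤ E(Δt,η) entrywise, u ∈ U₀ }, P̂(Δt) = Ã_0·U₀ ⊕ Ã_1·U₀ ⊕ … ⊕ Ã_η·U₀ ⊕ D(Δt), and define ε_U(Δt) = err( e^{A·t}·P̂(Δt) ). Then ε_U(Δt) → 0 as Δt → 0⁺ and ε_U(Δt) = O(Δt) as Δt → 0⁺, i.e., there exist constants c > 0 and δ > 0 with ε_U(Δt) ≤ c·Δt for all Δt ∈ (0,δ). -/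

import Mathlib

open scoped Pointwise

/-- Matrix exponential. -/
noncomputable def mexp {n : ℕ} (A : Matrix (Fin n) (Fin n) ℝ) : Matrix (Fin n) (Fin n) ℝ :=
  NormedSpace.exp A

/-- Matrix-vector multiplication on Euclidean space. -/
noncomputable def mvE {m n : ℕ} (M : Matrix (Fin m) (Fin n) ℝ)
    (x : EuclideanSpace ℝ (Fin n)) : EuclideanSpace ℝ (Fin m) :=
  Matrix.toEuclideanLin M x

/-- Image of a set under a matrix: M·S = {M·s : s ∈ S}. -/
noncomputable def imgM {m n : ℕ} (M : Matrix (Fin m) (Fin n) ℝ)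
    (S : Set (EuclideanSpace ℝ (Fin n))) : Set (EuclideanSpace ℝ (Fin m)) :=
  mvE M '' S

/-- Zonotope with center `c` and generator matrix `G`. -/
noncomputable def zono {n p : ℕ} (c : EuclideanSpace ℝ (Fin n))
    (G : Matrix (Fin n) (Fin p) ℝ) : Set (EuclideanSpace ℝ (Fin n)) :=
  {x | ∃ α : EuclideanSpace ℝ (Fin p), (∀ i, α i ∈ Set.Icc (-1 : ℝ) 1) ∧ x = c + mvE G α}

/-- Linear combination of two sets. -/
def linComb {n : ℕ} (S1 S2 : Set (EuclideanSpace ℝ (Fin n))) :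
    Set (EuclideanSpace ℝ (Fin n)) :=
  {x | ∃ s1 ∈ S1, ∃ s2 ∈ S2, ∃ lam ∈ Set.Icc (0 : ℝ) 1, x = lam • s1 + (1 - lam) • s2}

/-- Tightest axis-aligned interval enclosure of a set. -/
noncomputable def box {n : ℕ} (S : Set (EuclideanSpace ℝ (Fin n))) :
    Set (EuclideanSpace ℝ (Fin n)) :=
  {x | ∀ i, x i ∈ Set.Icc (sInf ((fun y => y i) '' S)) (sSup ((fun y => y i) '' S))}

/-- Radius of the smallest origin-centered enclosing hypersphere. -/
noncomputable def rad {n : ℕ} (S : Set (EuclideanSpace ℝ (Fin n))) : ℝ :=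
  sSup ((fun x => ‖x‖) '' S)

/-- err(S) = rad(box(S)). -/
noncomputable def err {n : ℕ} (S : Set (EuclideanSpace ℝ (Fin n))) : ℝ := rad (box S)

/-- Spectral norm (operator 2-norm) of a matrix. -/
noncomputable def specNorm {m n : ℕ} (M : Matrix (Fin m) (Fin n) ℝ) : ℝ :=
  ‖LinearMap.toContinuousLinearMap (Matrix.toEuclideanLin M)‖

/-- Particular solution set P_U(t). -/
noncomputable def PU {n : ℕ} (U0 : Set (EuclideanSpace ℝ (Fin n)))
    (A : Matrix (Fin n) (Fin n) ℝ) (t : ℝ) : Set (EuclideanSpace ℝ (Fin n)) :=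
  {x | ∃ u : ℝ → EuclideanSpace ℝ (Fin n), Measurable u ∧ (∀ θ ∈ Set.Icc 0 t, u θ ∈ U0) ∧
    x = ∫ θ in (0 : ℝ)..t, mvE (mexp ((t - θ) • A)) (u θ)}

/-- Entrywise integral ∫₀^t e^{A·σ} dσ of the matrix exponential. -/
noncomputable def intExp {n : ℕ} (A : Matrix (Fin n) (Fin n) ℝ) (t : ℝ) :
    Matrix (Fin n) (Fin n) ℝ :=
  Matrix.of fun i j => ∫ σ in (0 : ℝ)..t, mexp (σ • A) i j

/-- Entrywise absolute value of a matrix. -/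
def entAbs {m n : ℕ} (M : Matrix (Fin m) (Fin n) ℝ) : Matrix (Fin m) (Fin n) ℝ :=
  Matrix.of fun i j => |M i j|

/-- Exponential remainder matrix E(Δt,η). -/
noncomputable def Eexp {n : ℕ} (A : Matrix (Fin n) (Fin n) ℝ) (dt : ℝ) (η : ℕ) :
    Matrix (Fin n) (Fin n) ℝ :=
  mexp (dt • entAbs A) -
    ∑ i ∈ Finset.range (η + 1), ((Nat.factorial i : ℝ)⁻¹) • (dt • entAbs A) ^ i

/-- Ã_i = A^i·Δt^{i+1}/(i+1)!. -/
noncomputable def Atilde {n : ℕ} (A : Matrix (Fin n) (Fin n) ℝ) (dt : ℝ) (i : ℕ) :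
    Matrix (Fin n) (Fin n) ℝ :=
  (dt ^ (i + 1) / (Nat.factorial (i + 1) : ℝ)) • A ^ i

/-- D(Δt) = {Δt·M·u : |M| ≤ E(Δt,η) entrywise, u ∈ U₀}. -/
noncomputable def Dset {n : ℕ} (A : Matrix (Fin n) (Fin n) ℝ) (dt : ℝ) (η : ℕ)
    (U0 : Set (EuclideanSpace ℝ (Fin n))) : Set (EuclideanSpace ℝ (Fin n)) :=
  {x | ∃ M : Matrix (Fin n) (Fin n) ℝ, (∀ i j, |M i j| ≤ Eexp A dt η i j) ∧
    ∃ u ∈ U0, x = dt • mvE M u}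

/-- P̂(Δt) = Ã_0·U₀ ⊕ … ⊕ Ã_η·U₀ ⊕ D(Δt). -/
noncomputable def PhatSet {n : ℕ} (A : Matrix (Fin n) (Fin n) ℝ) (dt : ℝ) (η : ℕ)
    (U0 : Set (EuclideanSpace ℝ (Fin n))) : Set (EuclideanSpace ℝ (Fin n)) :=
  (∑ i ∈ Finset.range (η + 1), imgM (Atilde A dt i) U0) + Dset A dt η U0

/-- One-step accumulating error bound ε̂(Δt). -/
noncomputable def ehatStep {n : ℕ} (A : Matrix (Fin n) (Fin n) ℝ) (t : ℝ) (η : ℕ)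
    (U0 : Set (EuclideanSpace ℝ (Fin n))) (dt : ℝ) : ℝ :=
  err (imgM (mexp (t • A)) (imgM (∑ i ∈ Finset.Icc 1 η, Atilde A dt i) U0 + Dset A dt η U0)) +
  err (imgM (mexp (t • A)) ((∑ i ∈ Finset.Icc 1 η, imgM (Atilde A dt i) U0) + Dset A dt η U0))

/-- Scalar interval I_i(Δt). -/
noncomputable def Iint (i : ℕ) (dt : ℝ) : Set ℝ :=
  Set.Icc (((i : ℝ) ^ (-(i : ℝ) / ((i : ℝ) - 1)) - (i : ℝ) ^ (-(1 : ℝ) / ((i : ℝ) - 1))) * dt ^ i) 0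

/-- Interval matrix F_x(Δt). -/
noncomputable def Fx {n : ℕ} (A : Matrix (Fin n) (Fin n) ℝ) (η : ℕ) (dt : ℝ) :
    Set (Matrix (Fin n) (Fin n) ℝ) :=
  {M | ∃ τ : ℕ → ℝ, (∀ i ∈ Finset.Icc 2 η, τ i ∈ Iint i dt) ∧
    ∃ R : Matrix (Fin n) (Fin n) ℝ, (∀ i j, |R i j| ≤ Eexp A dt η i j) ∧
    M = (∑ i ∈ Finset.Icc 2 η, (τ i / (Nat.factorial i : ℝ)) • A ^ i) + R}

/-- Interval matrix F_u(Δt). -/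
noncomputable def Fu {n : ℕ} (A : Matrix (Fin n) (Fin n) ℝ) (η : ℕ) (dt : ℝ) :
    Set (Matrix (Fin n) (Fin n) ℝ) :=
  {N | ∃ τ : ℕ → ℝ, (∀ i ∈ Finset.Icc 2 (η + 1), τ i ∈ Iint i dt) ∧
    ∃ R : Matrix (Fin n) (Fin n) ℝ, (∀ i j, |R i j| ≤ Eexp A dt η i j) ∧
    N = (∑ i ∈ Finset.Icc 2 (η + 1), (τ i / (Nat.factorial i : ℝ)) • A ^ (i - 1)) + dt • R}

/-- Curvature enclosure set C(Δt). -/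
noncomputable def Cset {n p : ℕ} (A : Matrix (Fin n) (Fin n) ℝ) (η : ℕ) (dt : ℝ)
    (ch : EuclideanSpace ℝ (Fin n)) (Gh : Matrix (Fin n) (Fin p) ℝ)
    (utld : EuclideanSpace ℝ (Fin n)) : Set (EuclideanSpace ℝ (Fin n)) :=
  {y | ∃ M ∈ Fx A η dt, ∃ N ∈ Fu A η dt, ∃ x ∈ zono ch Gh, y = mvE M x + mvE N utld}

/-- ε_hom(Δt). -/
noncomputable def ehom {n p : ℕ} (A : Matrix (Fin n) (Fin n) ℝ) (η : ℕ)
    (ch : EuclideanSpace ℝ (Fin n)) (Gh : Matrix (Fin n) (Fin p) ℝ)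
    (utld : EuclideanSpace ℝ (Fin n)) (dt : ℝ) : ℝ :=
  2 * err (Cset A η dt ch Gh utld) + Real.sqrt p * specNorm ((mexp (dt • A) - 1) * Gh)

/-- ε_U(Δt) = err(e^{A·t}·P̂(Δt)). -/
noncomputable def errPhat {n : ℕ} (A : Matrix (Fin n) (Fin n) ℝ) (t : ℝ) (η : ℕ)
    (U0 : Set (EuclideanSpace ℝ (Fin n))) (dt : ℝ) : ℝ :=
  err (imgM (mexp (t • A)) (PhatSet A dt η U0))

/-! For `Δt ≤ 1` every summand of `P̂(Δt)` lies in a ball of radius `O(Δt)` about the origin: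
`‖Ã_i‖ ≤ Δt·‖A^i‖`, `D(Δt)` carries an explicit factor `Δt`, and `E(Δt,η)` stays bounded on
`[0,1]` by continuity. So does the image of `P̂(Δt)` under the fixed matrix `e^{A·t}`, and the
interval hull of a set inside the ball of radius `r` lies inside the ball of radius `√n·r`. -/

open Metric

theorem norm_le_sqrt_card_mul {n : ℕ} (x : EuclideanSpace ℝ (Fin n)) {r : ℝ} (hr : 0 ≤ r)
    (h : ∀ i, |x i| ≤ r) : ‖x‖ ≤ √n * r := by
  rw [EuclideanSpace.norm_eq, ← Real.sqrt_sq hr, ← Real.sqrt_mul (Nat.cast_nonneg n)]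
  gcongr
  calc ∑ i, ‖x i‖ ^ 2 ≤ ∑ _i : Fin n, r ^ 2 := by
        gcongr with i; simpa using h i
    _ = n * r ^ 2 := by simp

theorem err_nonneg {n : ℕ} (S : Set (EuclideanSpace ℝ (Fin n))) : 0 ≤ err S :=
  Real.sSup_nonneg (by rintro _ ⟨x, -, rfl⟩; exact norm_nonneg x)

theorem abs_le_of_mem_box {n : ℕ} {S : Set (EuclideanSpace ℝ (Fin n))} {r : ℝ} (hr : 0 ≤ r)
    (hS : S ⊆ closedBall 0 r) {x : EuclideanSpace ℝ (Fin n)} (hx : x ∈ box S) (i : Fin n) :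
    |x i| ≤ r := by
  have hcoord : ∀ y ∈ S, |y i| ≤ r := fun y hy =>
    (by simpa using PiLp.norm_apply_le y i : |y i| ≤ ‖y‖).trans (mem_closedBall_zero_iff.mp (hS hy))
  rcases ((fun y => y i) '' S).eq_empty_or_nonempty with hempty | hne
  · -- `sInf ∅ = sSup ∅ = 0` in `ℝ`, so this coordinate of the box is pinned at `0`
    have hxi : x i = 0 := by simpa [box, hempty] using hx i
    simpa [hxi] using hr
  refine abs_le.mpr ⟨?_, ?_⟩
  · refine (le_csInf hne ?_).trans (hx i).1
    rintro _ ⟨y, hy, rfl⟩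
    exact (abs_le.mp (hcoord y hy)).1
  · refine (hx i).2.trans (csSup_le hne ?_)
    rintro _ ⟨y, hy, rfl⟩
    exact (abs_le.mp (hcoord y hy)).2

theorem err_le_of_subset_closedBall {n : ℕ} {S : Set (EuclideanSpace ℝ (Fin n))} {r : ℝ}
    (hr : 0 ≤ r) (hS : S ⊆ closedBall 0 r) : err S ≤ √n * r :=
  Real.sSup_le (by
    rintro _ ⟨x, hx, rfl⟩
    exact norm_le_sqrt_card_mul x hr (abs_le_of_mem_box hr hS hx)) (by positivity)

section ClosedBall

variable {E : Type*} [SeminormedAddCommGroup E]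

theorem add_subset_closedBall_zero {S T : Set E} {r s : ℝ} (hS : S ⊆ closedBall 0 r)
    (hT : T ⊆ closedBall 0 s) : S + T ⊆ closedBall 0 (r + s) := by
  rintro _ ⟨x, hx, y, hy, rfl⟩
  rw [mem_closedBall_zero_iff]
  exact (norm_add_le x y).trans
    (add_le_add (mem_closedBall_zero_iff.mp (hS hx)) (mem_closedBall_zero_iff.mp (hT hy)))

theorem finsetSum_subset_closedBall_zero {ι : Type*} (s : Finset ι) {S : ι → Set E} {r : ι → ℝ}
    (h : ∀ i ∈ s, S i ⊆ closedBall 0 (r i)) : ∑ i ∈ s, S i ⊆ closedBall 0 (∑ i ∈ s, r i) := by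
  rintro _ hx
  obtain ⟨g, hg, rfl⟩ := (Set.mem_finsetSum _ _ _).mp hx
  rw [mem_closedBall_zero_iff]
  exact (norm_sum_le s g).trans
    (Finset.sum_le_sum fun i hi => mem_closedBall_zero_iff.mp (h i hi (hg hi)))

end ClosedBall

section Frobenius

open scoped Matrix Matrix.Norms.Frobenius

theorem norm_mvE_le {m n : ℕ} (M : Matrix (Fin m) (Fin n) ℝ) (x : EuclideanSpace ℝ (Fin n)) :
    ‖mvE M x‖ ≤ ‖M‖ * ‖x‖ := by
  have hcol : ∀ {k : ℕ} (v : EuclideanSpace ℝ (Fin k)), ‖v‖ = ‖Matrix.replicateCol Unit v.ofLp‖ :=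
    fun v => (Matrix.frobenius_norm_replicateCol v.ofLp).symm
  rw [hcol, hcol x]
  change ‖Matrix.replicateCol Unit (M *ᵥ x.ofLp)‖ ≤ _
  rw [Matrix.replicateCol_mulVec]
  exact Matrix.frobenius_norm_mul _ _

theorem frobenius_norm_le_of_abs_le {m n : ℕ} {M N : Matrix (Fin m) (Fin n) ℝ}
    (h : ∀ i j, |M i j| ≤ N i j) : ‖M‖ ≤ ‖N‖ := by
  rw [Matrix.frobenius_norm_def, Matrix.frobenius_norm_def]
  gcongr with i _ j _
  exact (h i j).trans (le_abs_self _)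

theorem continuous_Eexp {n : ℕ} (A : Matrix (Fin n) (Fin n) ℝ) (η : ℕ) :
    Continuous fun dt => Eexp A dt η := by
  unfold Eexp mexp
  fun_prop

theorem exists_norm_Eexp_le {n : ℕ} (A : Matrix (Fin n) (Fin n) ℝ) (η : ℕ) :
    ∃ K ≥ 0, ∀ dt ∈ Set.Icc (0 : ℝ) 1, ‖Eexp A dt η‖ ≤ K := by
  obtain ⟨K, hK⟩ := isCompact_Icc.exists_bound_of_continuousOn (continuous_Eexp A η).continuousOn
  exact ⟨K, (norm_nonneg _).trans (hK 0 ⟨le_rfl, zero_le_one⟩),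
    fun dt hdt => by simpa using hK dt hdt⟩

theorem norm_Atilde_le {n : ℕ} (A : Matrix (Fin n) (Fin n) ℝ) {dt : ℝ} (h0 : 0 ≤ dt)
    (h1 : dt ≤ 1) (i : ℕ) : ‖Atilde A dt i‖ ≤ dt * ‖A ^ i‖ := by
  have hcoef : dt ^ (i + 1) / (i + 1).factorial ≤ dt :=
    calc dt ^ (i + 1) / (i + 1).factorial ≤ dt ^ (i + 1) :=
          div_le_self (by positivity) (by exact_mod_cast (i + 1).factorial_pos)
      _ ≤ dt := pow_le_of_le_one h0 h1 (Nat.succ_ne_zero i)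
  rw [Atilde, norm_smul, Real.norm_of_nonneg (by positivity)]
  gcongr

theorem imgM_subset_closedBall_zero {m n : ℕ} (M : Matrix (Fin m) (Fin n) ℝ)
    {S : Set (EuclideanSpace ℝ (Fin n))} {r : ℝ} (hS : S ⊆ closedBall 0 r) :
    imgM M S ⊆ closedBall 0 (‖M‖ * r) := by
  rintro _ ⟨x, hx, rfl⟩
  rw [mem_closedBall_zero_iff]
  exact (norm_mvE_le M x).trans (by gcongr; exact mem_closedBall_zero_iff.mp (hS hx))

theorem Dset_subset_closedBall_zero {n : ℕ} (A : Matrix (Fin n) (Fin n) ℝ) {dt : ℝ} (hdt : 0 ≤ dt)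
    (η : ℕ) {U0 : Set (EuclideanSpace ℝ (Fin n))} {R : ℝ} (hU : U0 ⊆ closedBall 0 R) :
    Dset A dt η U0 ⊆ closedBall 0 (dt * (‖Eexp A dt η‖ * R)) := by
  rintro _ ⟨M, hM, u, hu, rfl⟩
  have hu : ‖u‖ ≤ R := mem_closedBall_zero_iff.mp (hU hu)
  rw [mem_closedBall_zero_iff, norm_smul, Real.norm_of_nonneg hdt]
  gcongr
  calc ‖mvE M u‖ ≤ ‖M‖ * ‖u‖ := norm_mvE_le M u
    _ ≤ ‖Eexp A dt η‖ * R := by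
      gcongr
      exact frobenius_norm_le_of_abs_le hM

theorem PhatSet_subset_closedBall_zero {n : ℕ} (A : Matrix (Fin n) (Fin n) ℝ) (η : ℕ)
    {U0 : Set (EuclideanSpace ℝ (Fin n))} {R : ℝ} (hR : 0 ≤ R) (hU : U0 ⊆ closedBall 0 R)
    {dt : ℝ} (h0 : 0 ≤ dt) (h1 : dt ≤ 1) {K : ℝ} (hK : ‖Eexp A dt η‖ ≤ K) :
    PhatSet A dt η U0 ⊆
      closedBall 0 (dt * ((∑ i ∈ Finset.range (η + 1), ‖A ^ i‖ + K) * R)) := by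
  refine (add_subset_closedBall_zero
    (finsetSum_subset_closedBall_zero _ fun i _ => imgM_subset_closedBall_zero _ hU)
    (Dset_subset_closedBall_zero A h0 η hU)).trans (closedBall_subset_closedBall ?_)
  calc ∑ i ∈ Finset.range (η + 1), ‖Atilde A dt i‖ * R + dt * (‖Eexp A dt η‖ * R)
      ≤ ∑ i ∈ Finset.range (η + 1), dt * ‖A ^ i‖ * R + dt * (K * R) := by
        gcongr with i
        exact norm_Atilde_le A h0 h1 i
    _ = dt * ((∑ i ∈ Finset.range (η + 1), ‖A ^ i‖ + K) * R) := by
        rw [add_mul, mul_add, Finset.sum_mul, Finset.mul_sum]; simp only [mul_assoc]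

theorem exists_errPhat_le_mul {n : ℕ} (A : Matrix (Fin n) (Fin n) ℝ) (t : ℝ) (η : ℕ)
    {U0 : Set (EuclideanSpace ℝ (Fin n))} (hbdd : Bornology.IsBounded U0) :
    ∃ c, ∀ dt ∈ Set.Icc (0 : ℝ) 1, errPhat A t η U0 dt ≤ c * dt := by
  obtain ⟨R, hR, hUR⟩ := hbdd.exists_pos_norm_le
  have hU : U0 ⊆ closedBall 0 R := fun u hu => mem_closedBall_zero_iff.mpr (hUR u hu)
  obtain ⟨K, hK0, hK⟩ := exists_norm_Eexp_le A η
  set C := (∑ i ∈ Finset.range (η + 1), ‖A ^ i‖ + K) * R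
  refine ⟨√n * ‖mexp (t • A)‖ * C, fun dt hdt => ?_⟩
  calc errPhat A t η U0 dt ≤ √n * (‖mexp (t • A)‖ * (dt * C)) :=
        err_le_of_subset_closedBall (by have := hdt.1; positivity) (imgM_subset_closedBall_zero _
          (PhatSet_subset_closedBall_zero A η hR.le hU hdt.1 hdt.2 (hK dt hdt)))
    _ = √n * ‖mexp (t • A)‖ * C * dt := by ring

end Frobenius

theorem errPhat_limit_and_order_general {n : ℕ} (U0 : Set (EuclideanSpace ℝ (Fin n)))
    (hcomp : IsCompact U0) (A : Matrix (Fin n) (Fin n) ℝ)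
    (t : ℝ) (η : ℕ) :
    Filter.Tendsto (fun dt => errPhat A t η U0 dt)
      (nhdsWithin 0 (Set.Ioi 0)) (nhds 0) ∧
    ∃ c > (0 : ℝ), ∃ δ > (0 : ℝ), ∀ dt ∈ Set.Ioo (0 : ℝ) δ,
      errPhat A t η U0 dt ≤ c * dt := by
  obtain ⟨c, hc⟩ := exists_errPhat_le_mul A t η hcomp.isBounded
  have hbound : ∀ dt ∈ Set.Ioo (0 : ℝ) 1, errPhat A t η U0 dt ≤ max c 1 * dt := fun dt hdt =>
    (hc dt (Set.Ioo_subset_Icc_self hdt)).trans (by gcongr; exacts [hdt.1.le, le_max_left c 1])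
  refine ⟨?_, max c 1, by positivity, 1, one_pos, hbound⟩
  refine squeeze_zero' (Filter.Eventually.of_forall fun dt => err_nonneg _)
    (Filter.eventually_of_mem (Ioo_mem_nhdsGT one_pos) hbound) ?_
  exact ((continuous_const_mul _).tendsto' 0 0 (mul_zero _)).mono_left nhdsWithin_le_nhds

/-- the error `ε_U(Δt) = err(e^{A·t}·P̂(Δt))` tends to 0 and is `O(Δt)`. -/
theorem errPhat_limit_and_order {n : ℕ} (U0 : Set (EuclideanSpace ℝ (Fin n)))
    (hne : U0.Nonempty) (hcomp : IsCompact U0) (A : Matrix (Fin n) (Fin n) ℝ)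
    (t : ℝ) (ht : 0 ≤ t) (η : ℕ) (hη : 1 ≤ η) :
    Filter.Tendsto (fun dt => errPhat A t η U0 dt)
      (nhdsWithin 0 (Set.Ioi 0)) (nhds 0) ∧
    ∃ c > (0 : ℝ), ∃ δ > (0 : ℝ), ∀ dt ∈ Set.Ioo (0 : ℝ) δ,
      errPhat A t η U0 dt ≤ c * dt :=
  errPhat_limit_and_order_general U0 hcomp A t η
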